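/- arXiv:1803.05324 — 4 statements merged into one kernel-verified Lean document; each statement's English description precedes it below -/
import Mathlib

section
/- Let n ≥ 1 and let p₁,…,pₙ ≥ 2 be integers. Then the Newton number of F₀ = {p₁e₁,…,pₙeₙ} satisfies ν(F₀) = ∏_{k=1}^{n} (p_k − 1). -/
open MeasureTheory

/-- The Newton polyhedron `Γ₊(F)` of a finite set `F ⊆ ℕⁿ` of lattice points:
the convex hull of `⋃_{a ∈ F} (a + ℝ≥0ⁿ)`. -/
noncomputable def newtonPolyhedron {n : ℕ} (F : Finset (Fin n → ℕ)) :
    Set (Fin n → ℝ) :=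
  convexHull ℝ (⋃ a ∈ F, {x : Fin n → ℝ | ∀ k, (a k : ℝ) ≤ x k})

/-- `V_I(F)`: the `|I|`-dimensional Lebesgue measure (computed inside the
coordinate subspace `ℝ^I`) of the set of points of the nonnegative orthant of
`ℝ^I` that do not belong to `Γ₊(F_I)`, where
`F_I = {a ∈ F : aₖ = 0 for all k ∉ I}`.  For `I = ∅` this equals `1`
(whenever `0 ∉ F`). -/
noncomputable def newtonVolume {n : ℕ} (F : Finset (Fin n → ℕ))
    (I : Finset (Fin n)) : ℝ :=
  (volume {x : {k // k ∈ I} → ℝ |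
      (∀ j, 0 ≤ x j) ∧
      (fun k => if h : k ∈ I then x ⟨k, h⟩ else 0) ∉
        newtonPolyhedron (F.filter fun a => ∀ k, k ∉ I → a k = 0)}).toReal

/-- The Newton number `ν(F) = Σ_{I ⊆ {1,…,n}} (−1)^{n−|I|} |I|! V_I(F)`. -/
noncomputable def newtonNumber {n : ℕ} (F : Finset (Fin n → ℕ)) : ℝ :=
  ∑ I : Finset (Fin n),
    (-1 : ℝ) ^ (n - I.card) * (Nat.factorial I.card : ℝ) * newtonVolume F I

/-! Inside `ℝ^I` only the points `p_k e_k` with `k ∈ I` survive, and on the orthant their Newton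
polyhedron is the half-space `∑_{k ∈ I} y_k / p_k ≥ 1`. Hence `V_I` is the volume of the simplex
with legs `p_k`, that is `∏_{k ∈ I} p_k / |I|!`, and the Newton number becomes
`∑_I (-1)^{n - |I|} ∏_{k ∈ I} p_k`, which is the expansion of `∏_k (p_k - 1)`. -/

def orthantSimplex (ι : Type*) [Fintype ι] (c : ℝ) : Set (ι → ℝ) :=
  {x | (∀ i, 0 ≤ x i) ∧ ∑ i, x i < c}

section orthantSimplex

variable {ι : Type*} [Fintype ι]

theorem measurableSet_orthantSimplex (c : ℝ) : MeasurableSet (orthantSimplex ι c) := by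
  unfold orthantSimplex
  measurability

theorem orthantSimplex_eq_empty {c : ℝ} (hc : c ≤ 0) : orthantSimplex ι c = ∅ :=
  Set.eq_empty_of_forall_notMem fun _ ⟨hx, hsum⟩ =>
    (Finset.sum_nonneg fun i _ => hx i).not_gt (hsum.trans_le hc)

theorem integral_sub_pow_div_factorial (n : ℕ) (c : ℝ) :
    ∫ t in (0 : ℝ)..c, (c - t) ^ n / n.factorial = c ^ (n + 1) / (n + 1).factorial := by
  rw [intervalIntegral.integral_div, intervalIntegral.integral_comp_sub_left (· ^ n),
    sub_self, sub_zero, integral_pow, Nat.factorial_succ]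
  push_cast
  field_simp
  ring

theorem volume_orthantSimplex_fin (n : ℕ) {c : ℝ} (hc : 0 < c) :
    volume (orthantSimplex (Fin n) c) = ENNReal.ofReal (c ^ n / n.factorial) := by
  induction n generalizing c with
  | zero =>
    have : orthantSimplex (Fin 0) c = Set.univ := by ext x; simp [orthantSimplex, hc]
    simp [this, volume_pi]
  | succ n ih =>
    set T : Set (ℝ × (Fin n → ℝ)) := {y | 0 ≤ y.1 ∧ y.2 ∈ orthantSimplex (Fin n) (c - y.1)}
    have hT : MeasurableSet T := by
      simp only [T, orthantSimplex, Set.mem_ofPred_eq]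
      measurability
    have hpre : MeasurableEquiv.piFinSuccAbove (fun _ => ℝ) 0 ⁻¹' T
        = orthantSimplex (Fin (n + 1)) c := by
      ext x
      simp [T, orthantSimplex, Fin.forall_fin_succ, Fin.sum_univ_succ, Fin.tail,
        lt_sub_iff_add_lt', and_assoc]
    have hslice (t : ℝ) : volume (Prod.mk t ⁻¹' T)
        = (Set.Ico 0 c).indicator (fun t => ENNReal.ofReal ((c - t) ^ n / n.factorial)) t := by
      by_cases ht : t ∈ Set.Ico 0 c
      · have : Prod.mk t ⁻¹' T = orthantSimplex (Fin n) (c - t) := by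
          ext y; simp [T, ht.1]
        rw [this, ih (sub_pos.2 ht.2), Set.indicator_of_mem ht]
      · have : Prod.mk t ⁻¹' T = ∅ := Set.eq_empty_of_forall_notMem fun y ⟨h0, hy⟩ => by
          have : c - t ≤ 0 := by simp only [Set.mem_Ico, not_and, not_lt] at ht; linarith [ht h0]
          simp [orthantSimplex_eq_empty this] at hy
        rw [this, Set.indicator_of_notMem ht, measure_empty]
    rw [← hpre, (volume_preserving_piFinSuccAbove (fun _ => ℝ) 0).measure_preimage
      hT.nullMeasurableSet, Measure.volume_eq_prod, Measure.prod_apply hT]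
    simp_rw [hslice]
    rw [lintegral_indicator measurableSet_Ico, ← ofReal_integral_eq_lintegral_ofReal,
      integral_Ico_eq_integral_Ioo, ← integral_Ioc_eq_integral_Ioo,
      ← intervalIntegral.integral_of_le hc.le, integral_sub_pow_div_factorial]
    · exact (Continuous.integrableOn_Icc (by fun_prop)).mono_set Set.Ico_subset_Icc_self
    · filter_upwards [ae_restrict_mem measurableSet_Ico] with t ht
      have : 0 ≤ c - t := by linarith [ht.2]
      positivity

theorem volume_orthantSimplex {c : ℝ} (hc : 0 < c) :
    volume (orthantSimplex ι c)
      = ENNReal.ofReal (c ^ Fintype.card ι / (Fintype.card ι).factorial) := by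
  let e := (Fintype.equivFin ι).symm
  have hpre : MeasurableEquiv.piCongrLeft (fun _ => ℝ) e ⁻¹' orthantSimplex ι c
      = orthantSimplex (Fin (Fintype.card ι)) c := by
    ext x
    simp only [orthantSimplex, Set.mem_preimage, Set.mem_ofPred_eq]
    rw [← e.forall_congr_right, ← e.sum_comp]
    simp only [MeasurableEquiv.coe_piCongrLeft, Equiv.piCongrLeft_apply_apply]
  rw [← (volume_measurePreserving_piCongrLeft (fun _ => ℝ) e).measure_preimage
    (measurableSet_orthantSimplex c).nullMeasurableSet, hpre, volume_orthantSimplex_fin _ hc]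

theorem volume_weighted_orthantSimplex {q : ι → ℝ} (hq : ∀ i, 0 < q i) :
    volume {x : ι → ℝ | (∀ i, 0 ≤ x i) ∧ ∑ i, x i / q i < 1}
      = ENNReal.ofReal ((∏ i, q i) / (Fintype.card ι).factorial) := by
  classical
  let f := Matrix.toLin' (Matrix.diagonal fun i => (q i)⁻¹)
  have hdet : LinearMap.det f = (∏ i, q i)⁻¹ := by
    simp [f, LinearMap.det_toLin', Matrix.det_diagonal, Finset.prod_inv_distrib]
  have hpre : {x : ι → ℝ | (∀ i, 0 ≤ x i) ∧ ∑ i, x i / q i < 1} = f ⁻¹' orthantSimplex ι 1 := by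
    ext x
    simp [f, orthantSimplex, Matrix.mulVec_diagonal, div_eq_mul_inv, mul_comm, hq]
  have hprod : 0 < ∏ i, q i := Finset.prod_pos fun i _ => hq i
  rw [hpre, Measure.addHaar_preimage_linearMap _ (by simp [hdet, hprod.ne']),
    volume_orthantSimplex one_pos, hdet, inv_inv, abs_of_pos hprod, ← ENNReal.ofReal_mul hprod.le]
  simp [div_eq_mul_inv]

end orthantSimplex

section newtonPolyhedron

open scoped Pointwise

variable {n : ℕ}

theorem mem_newtonPolyhedron_of_le {F : Finset (Fin n → ℕ)} {y z : Fin n → ℝ}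
    (hz : z ∈ convexHull ℝ ((fun a k => (a k : ℝ)) '' (F : Set (Fin n → ℕ)))) (hzy : z ≤ y) :
    y ∈ newtonPolyhedron F := by
  have hsub : (fun a k => (a k : ℝ)) '' (F : Set (Fin n → ℕ)) + ({y - z} : Set (Fin n → ℝ))
      ⊆ ⋃ a ∈ F, {x : Fin n → ℝ | ∀ k, (a k : ℝ) ≤ x k} := by
    rintro _ ⟨_, ⟨a, ha, rfl⟩, _, rfl, rfl⟩
    exact Set.mem_biUnion ha fun k => by simpa using hzy k
  refine convexHull_mono hsub ?_
  rw [convexHull_add, convexHull_singleton]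
  exact ⟨z, hz, y - z, rfl, add_sub_cancel z y⟩

variable {p : Fin n → ℕ} {I : Finset (Fin n)}

theorem natCast_piSingle (k : Fin n) (m : ℕ) :
    (fun j => ((Pi.single k m : Fin n → ℕ) j : ℝ)) = Pi.single k (m : ℝ) :=
  funext (Pi.apply_single (fun _ => Nat.cast) (fun _ => Nat.cast_zero) k m)

theorem newtonPolyhedron_image_single_subset (hp : ∀ k ∈ I, 0 < p k) :
    newtonPolyhedron (I.image fun k => Pi.single k (p k))
      ⊆ {y | 1 ≤ ∑ k ∈ I, y k / p k} := by
  refine convexHull_min ?_ (convex_halfSpace_ge ?_ 1)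
  · simp only [Set.iUnion_subset_iff, Finset.mem_image]
    rintro _ ⟨k, hk, rfl⟩ x hx
    have hx0 (j : Fin n) : 0 ≤ x j := (Nat.cast_nonneg _).trans (hx j)
    calc (1 : ℝ) ≤ x k / p k := by
          rw [one_le_div (by exact_mod_cast hp k hk)]
          simpa using hx k
      _ ≤ ∑ j ∈ I, x j / p j :=
          Finset.single_le_sum (fun j _ => div_nonneg (hx0 j) (Nat.cast_nonneg _)) hk
  · exact ⟨fun a b => by simp [add_div, Finset.sum_add_distrib],
      fun c a => by simp [Finset.mul_sum, mul_div_assoc]⟩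

theorem mem_newtonPolyhedron_image_single_of_le (hp : ∀ k ∈ I, 0 < p k) {y : Fin n → ℝ}
    (hy : 0 ≤ y) (h : 1 ≤ ∑ k ∈ I, y k / p k) :
    y ∈ newtonPolyhedron (I.image fun k => Pi.single k (p k)) := by
  set s := ∑ k ∈ I, y k / p k
  have hs : 0 < s := one_pos.trans_le h
  -- `z` is where the ray through the `I`-part of `y` meets the simplex spanned by the `p_k e_k`.
  refine mem_newtonPolyhedron_of_le (z := s⁻¹ • ∑ k ∈ I, Pi.single k (y k)) ?_ fun j => ?_
  · have hz : s⁻¹ • ∑ k ∈ I, Pi.single k (y k)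
        = ∑ k ∈ I, (y k / p k / s) • Pi.single k (p k : ℝ) := by
      rw [Finset.smul_sum]
      refine Finset.sum_congr rfl fun k hk => ?_
      have : (p k : ℝ) ≠ 0 := by exact_mod_cast (hp k hk).ne'
      rw [← Pi.single_smul', ← Pi.single_smul', smul_eq_mul, smul_eq_mul]
      field_simp
    rw [hz]
    have hw (k) (_ : k ∈ I) : 0 ≤ y k / p k / s :=
      div_nonneg (div_nonneg (hy k) (Nat.cast_nonneg _)) hs.le
    refine (convex_convexHull ℝ _).sum_mem hw ?_ fun k hk => ?_
    · rw [← Finset.sum_div, div_self hs.ne']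
    · exact subset_convexHull ℝ _ ⟨_, by simpa using ⟨k, hk, rfl⟩, natCast_piSingle k (p k)⟩
  · simp only [Pi.smul_apply, Finset.sum_apply, Finset.sum_pi_single, smul_eq_mul]
    split_ifs
    · exact mul_le_of_le_one_left (hy j) (inv_le_one_of_one_le₀ h)
    · simpa using hy j

theorem mem_newtonPolyhedron_image_single_iff (hp : ∀ k ∈ I, 0 < p k) {y : Fin n → ℝ}
    (hy : 0 ≤ y) :
    y ∈ newtonPolyhedron (I.image fun k => Pi.single k (p k)) ↔ 1 ≤ ∑ k ∈ I, y k / p k :=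
  ⟨fun h => newtonPolyhedron_image_single_subset hp h,
    mem_newtonPolyhedron_image_single_of_le hp hy⟩

end newtonPolyhedron

section brieskornPham

variable {n : ℕ} {p : Fin n → ℕ}

theorem filter_image_single_eq (hp : ∀ k, p k ≠ 0) (I : Finset (Fin n)) :
    (Finset.univ.image fun k => Pi.single k (p k)).filter (fun a => ∀ k, k ∉ I → a k = 0)
      = I.image fun k => Pi.single k (p k) := by
  ext a
  simp only [Finset.mem_filter, Finset.mem_image, Finset.mem_univ, true_and]
  constructor
  · rintro ⟨⟨k, rfl⟩, h⟩
    exact ⟨k, by_contra fun hk => hp k (by simpa using h k hk), rfl⟩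
  · rintro ⟨k, hk, rfl⟩
    exact ⟨⟨k, rfl⟩, fun j hj => Pi.single_eq_of_ne (ne_of_mem_of_not_mem hk hj).symm _⟩

theorem newtonVolume_image_single (hp : ∀ k, 0 < p k) (I : Finset (Fin n)) :
    newtonVolume (Finset.univ.image fun k => Pi.single k (p k)) I
      = (∏ k ∈ I, (p k : ℝ)) / I.card.factorial := by
  have hset : {x : I → ℝ | (∀ j, 0 ≤ x j) ∧
        (fun k => if h : k ∈ I then x ⟨k, h⟩ else 0) ∉
          newtonPolyhedron ((Finset.univ.image fun k => Pi.single k (p k)).filter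
            fun a => ∀ k, k ∉ I → a k = 0)}
      = {x : I → ℝ | (∀ j, 0 ≤ x j) ∧ ∑ j, x j / p j < 1} := by
    ext x
    simp only [Set.mem_ofPred_eq, filter_image_single_eq (fun k => (hp k).ne'),
      and_congr_right_iff]
    intro hx
    rw [mem_newtonPolyhedron_image_single_iff (fun k _ => hp k), not_le, ← Finset.sum_coe_sort I]
    · simp
    · intro k
      dsimp only [Pi.zero_apply]
      split_ifs <;> simp [hx]
  rw [newtonVolume, hset,
    volume_weighted_orthantSimplex (q := fun j : I => (p j : ℝ)) fun j => Nat.cast_pos.2 (hp j),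
    ENNReal.toReal_ofReal (by positivity), Fintype.card_coe,
    Finset.prod_coe_sort I fun k => (p k : ℝ)]

end brieskornPham

theorem Fintype.prod_sub_one_eq_sum {ι R : Type*} [Fintype ι] [CommRing R] (f : ι → R) :
    ∏ i, (f i - 1) = ∑ s : Finset ι, (-1) ^ (Fintype.card ι - s.card) * ∏ i ∈ s, f i := by
  classical
  simp_rw [sub_eq_add_neg]
  rw [Finset.prod_add, Finset.powerset_univ]
  refine Finset.sum_congr rfl fun s _ => ?_
  rw [Finset.prod_const, Finset.card_univ_sdiff, mul_comm]

theorem newtonNumber_brieskorn_pham_general (n : ℕ) (p : Fin n → ℕ)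
    (hp : ∀ k, 2 ≤ p k) :
    newtonNumber (Finset.image (fun k : Fin n => Pi.single k (p k))
      Finset.univ) = ∏ k, ((p k : ℝ) - 1) := by
  have hp₀ (k : Fin n) : 0 < p k := by have := hp k; omega
  rw [newtonNumber, Fintype.prod_sub_one_eq_sum, Fintype.card_fin]
  refine Finset.sum_congr rfl fun I _ => ?_
  rw [newtonVolume_image_single hp₀, mul_assoc, mul_div_cancel₀ _ (by positivity)]

/-- The Newton number of `F₀ = {p₁e₁, …, pₙeₙ}` (the support of the
Brieskorn–Pham singularity `z₁^{p₁} + ⋯ + zₙ^{pₙ}`) equals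
`∏ₖ (pₖ − 1)`. -/
theorem newtonNumber_brieskorn_pham (n : ℕ) (hn : 1 ≤ n) (p : Fin n → ℕ)
    (hp : ∀ k, 2 ≤ p k) :
    newtonNumber (Finset.image (fun k : Fin n => Pi.single k (p k))
      Finset.univ) = ∏ k, ((p k : ℝ) - 1) :=
  newtonNumber_brieskorn_pham_general n p hp
end

section
/- Let n ≥ 1, let p₁,…,pₙ ≥ 2 be integers, write p′_k = ∏_{j≠k} p_j, and let i ∈ ℕⁿ be a lattice point with i_k ≥ 1 for every k and i₁/p₁ + … + iₙ/pₙ < 1. Then ν(F₀) − ν(F₀ ∪ {i}) = p₁⋯pₙ − i₁p′₁ − … − iₙp′ₙ, where F₀ = {p₁e₁,…,pₙeₙ}. -/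
open MeasureTheory

/-!
Adjoining `i` changes only the term `I = {1, …, n}` of the Newton number, because `i` has no
zero coordinate; so the difference is `n!` times the difference of the volumes of the regions
under the two Newton diagrams. Under `Γ₊(F₀)` lies the simplex with vertices `0` and `pₖ eₖ`, of
volume `p₁⋯pₙ / n!`. Adjoining `i` leaves below the diagram the `n` simplices with vertices `0`,
`i` and `pⱼ eⱼ` (`j ≠ k`), of volumes `iₖ p′ₖ / n!`: the one containing `x` is the one where
`xₖ / iₖ` is minimal. The volume `1 / n!` of the standard simplex is read off from the volume of
the `ℓ¹` unit ball, which is the union of `2ⁿ` reflected copies of it.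
-/

open Finset Matrix
open scoped Nat

section NewtonNumber

variable {n : ℕ}

theorem newtonVolume_insert_of_notMem {F : Finset (Fin n → ℕ)} {a : Fin n → ℕ}
    {I : Finset (Fin n)} {k : Fin n} (hk : k ∉ I) (ha : a k ≠ 0) :
    newtonVolume (insert a F) I = newtonVolume F I := by
  rw [newtonVolume, filter_insert, if_neg fun h => ha (h k hk), newtonVolume]

theorem newtonNumber_sub_newtonNumber_insert (F : Finset (Fin n → ℕ)) {a : Fin n → ℕ}
    (ha : ∀ k, a k ≠ 0) :
    newtonNumber F - newtonNumber (insert a F) =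
      n ! * (newtonVolume F univ - newtonVolume (insert a F) univ) := by
  rw [newtonNumber, newtonNumber, ← sum_sub_distrib, sum_eq_single_of_mem univ (mem_univ _)]
  · simp only [card_univ, Fintype.card_fin, Nat.sub_self, pow_zero, one_mul, mul_sub]
  · intro I _ hI
    obtain ⟨k, hk⟩ : ∃ k, k ∉ I := by simpa [eq_univ_iff_forall] using hI
    rw [newtonVolume_insert_of_notMem hk (ha k), sub_self]

theorem newtonVolume_univ (F : Finset (Fin n → ℕ)) :
    newtonVolume F univ =
      (volume {x : Fin n → ℝ | (∀ k, 0 ≤ x k) ∧ x ∉ newtonPolyhedron F}).toReal := by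
  let e := MeasurableEquiv.piCongrLeft (fun _ : Fin n => ℝ)
    (Equiv.subtypeUnivEquiv (p := (· ∈ (univ : Finset (Fin n)))) mem_univ)
  have he (x : {k // k ∈ (univ : Finset (Fin n))} → ℝ) : e x = fun k => x ⟨k, mem_univ k⟩ :=
    funext fun k => Equiv.piCongrLeft_apply_apply (fun _ : Fin n => ℝ) _ x ⟨k, mem_univ k⟩
  have he_pres : MeasurePreserving e := volume_measurePreserving_piCongrLeft _ _
  rw [newtonVolume, ← he_pres.measure_preimage_equiv]
  congr 2
  ext x
  simp [he, Subtype.forall]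

end NewtonNumber

section UnitSimplex

variable {ι : Type*} [Fintype ι]

def unitSimplex (ι : Type*) [Fintype ι] : Set (ι → ℝ) :=
  {u | (∀ k, 0 ≤ u k) ∧ ∑ k, u k < 1}

theorem measurableSet_unitSimplex : MeasurableSet (unitSimplex ι) := by
  rw [unitSimplex, Set.ofPred_and, Set.ofPred_forall]
  exact (MeasurableSet.iInter fun k => measurableSet_le measurable_const
    (measurable_pi_apply k)).inter
    (measurableSet_lt (Finset.measurable_sum _ fun k _ => measurable_pi_apply k) measurable_const)

theorem volume_setOf_eq_zero_of_ne_zero {f : (ι → ℝ) →ₗ[ℝ] ℝ} (hf : f ≠ 0) :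
    volume {x | f x = 0} = 0 :=
  Measure.addHaar_submodule _ (LinearMap.ker f) fun h => hf (LinearMap.ker_eq_top.1 h)

variable [DecidableEq ι]

theorem volume_image_toLin' (M : Matrix ι ι ℝ) (s : Set (ι → ℝ)) :
    volume (toLin' M '' s) = ENNReal.ofReal |M.det| * volume s := by
  rw [Measure.addHaar_image_linearMap, LinearMap.det_toLin']

theorem measurableSet_image_toLin' {M : Matrix ι ι ℝ} (hM : M.det ≠ 0) {s : Set (ι → ℝ)}
    (hs : MeasurableSet s) : MeasurableSet (toLin' M '' s) := by
  let e := (toLin' M).equivOfDetNeZero (by rwa [LinearMap.det_toLin'])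
  change MeasurableSet (e '' s)
  rw [e.image_eq_preimage_symm]
  exact (LinearMap.continuous_of_finiteDimensional e.symm.toLinearMap).measurable hs

def coordReflection (s : Finset ι) : (ι → ℝ) →ₗ[ℝ] ι → ℝ :=
  toLin' (diagonal fun k => if k ∈ s then -1 else 1)

theorem coordReflection_apply (s : Finset ι) (x : ι → ℝ) (k : ι) :
    coordReflection s x k = if k ∈ s then -x k else x k := by
  simp [coordReflection, mulVec_diagonal, apply_ite (· * x k)]

theorem abs_coordReflection_apply (s : Finset ι) (x : ι → ℝ) (k : ι) :
    |coordReflection s x k| = |x k| := by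
  rw [coordReflection_apply]; split_ifs <;> simp

theorem abs_det_coordReflection (s : Finset ι) : |LinearMap.det (coordReflection s)| = 1 := by
  rw [coordReflection, LinearMap.det_toLin', det_diagonal, Finset.abs_prod]
  exact prod_eq_one fun k _ => by split_ifs <;> simp

theorem setOf_sum_abs_lt_one_eq_iUnion :
    {x : ι → ℝ | ∑ k, |x k| < 1} = ⋃ s : Finset ι, coordReflection s ⁻¹' unitSimplex ι := by
  ext x
  simp only [Set.mem_ofPred_eq, Set.mem_iUnion, Set.mem_preimage, unitSimplex]
  constructor
  · intro hx
    refine ⟨univ.filter fun k => x k < 0, fun k => ?_, ?_⟩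
    · rw [coordReflection_apply]
      split_ifs with h <;> simp only [mem_filter, mem_univ, true_and, not_lt] at h <;> linarith
    · convert hx using 2 with k
      rw [coordReflection_apply]
      split_ifs with h <;> simp only [mem_filter, mem_univ, true_and, not_lt] at h
      · exact (abs_of_neg h).symm
      · exact (abs_of_nonneg h).symm
  · rintro ⟨s, hs_nonneg, hs_sum⟩
    have h_abs (k : ι) : |x k| = coordReflection s x k := by
      rw [← abs_coordReflection_apply s, abs_of_nonneg (hs_nonneg k)]
    simpa only [h_abs] using hs_sum

theorem pairwise_aedisjoint_preimage_coordReflection :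
    Pairwise (Function.onFun (AEDisjoint volume)
      fun s : Finset ι => coordReflection s ⁻¹' unitSimplex ι) := by
  intro s t hst
  obtain ⟨k, hk⟩ : ∃ k, (k ∈ s ∧ k ∉ t) ∨ (k ∈ t ∧ k ∉ s) := by
    by_contra! h
    exact hst (Finset.ext fun k => ⟨fun hs => (h k).1 hs, fun ht => (h k).2 ht⟩)
  refine measure_mono_null (fun x ⟨hxs, hxt⟩ => ?_)
    (volume_setOf_eq_zero_of_ne_zero (f := LinearMap.proj k) fun h => by
      simpa using congr($h (fun _ => 1)))
  have h1 := hxs.1 k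
  have h2 := hxt.1 k
  rw [coordReflection_apply] at h1 h2
  show x k = 0
  rcases hk with ⟨hs, ht⟩ | ⟨ht, hs⟩ <;> simp only [hs, ht, if_true, if_false] at h1 h2 <;> linarith

theorem volume_unitSimplex :
    volume (unitSimplex ι) = ENNReal.ofReal (Fintype.card ι)!⁻¹ := by
  have h_meas (s : Finset ι) : NullMeasurableSet (coordReflection s ⁻¹' unitSimplex ι) :=
    (measurableSet_unitSimplex.preimage
      (coordReflection s).continuous_of_finiteDimensional.measurable).nullMeasurableSet
  have h_reflection (s : Finset ι) :
      volume (coordReflection s ⁻¹' unitSimplex ι) = volume (unitSimplex ι) := by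
    have h_det : LinearMap.det (coordReflection s) ≠ 0 := fun h => by
      simpa [h] using abs_det_coordReflection s
    rw [Measure.addHaar_preimage_linearMap _ h_det, abs_inv, abs_det_coordReflection, inv_one,
      ENNReal.ofReal_one, one_mul]
  have h_ball := volume_sum_rpow_lt_one ι le_rfl
  simp only [Real.rpow_one, div_one, one_add_one_eq_two, Real.Gamma_two, mul_one,
    Real.Gamma_nat_eq_factorial] at h_ball
  rw [setOf_sum_abs_lt_one_eq_iUnion,
    measure_iUnion₀ pairwise_aedisjoint_preimage_coordReflection h_meas, tsum_fintype] at h_ball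
  simp only [h_reflection, sum_const, card_univ, Fintype.card_finset, nsmul_eq_mul] at h_ball
  rw [div_eq_mul_inv, ENNReal.ofReal_mul (by positivity), ENNReal.ofReal_pow zero_le_two,
    ENNReal.ofReal_ofNat, Nat.cast_pow, Nat.cast_ofNat] at h_ball
  exact (ENNReal.mul_right_inj (by simp) (by simp)).1 h_ball

end UnitSimplex

section NewtonPolyhedron

variable {n : ℕ}

theorem mem_newtonPolyhedron_of_le_s7 {F : Finset (Fin n → ℕ)} {a : Fin n → ℕ} (ha : a ∈ F)
    {x : Fin n → ℝ} (hx : ∀ k, (a k : ℝ) ≤ x k) : x ∈ newtonPolyhedron F :=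
  subset_convexHull ℝ _ (Set.mem_biUnion ha hx)

theorem newtonPolyhedron_mono {F G : Finset (Fin n → ℕ)} (h : F ⊆ G) :
    newtonPolyhedron F ⊆ newtonPolyhedron G :=
  convexHull_mono (Set.biUnion_subset_biUnion_left (Finset.coe_subset.2 h))

theorem newtonPolyhedron_subset_of_convex {F : Finset (Fin n → ℕ)} {C : Set (Fin n → ℝ)}
    (hC : Convex ℝ C) (hF : ∀ a ∈ F, {x | ∀ k, (a k : ℝ) ≤ x k} ⊆ C) :
    newtonPolyhedron F ⊆ C :=
  convexHull_min (Set.iUnion₂_subset hF) hC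

theorem newtonPolyhedron_insert_subset_of_convex {F : Finset (Fin n → ℕ)} {a : Fin n → ℕ}
    {C : Set (Fin n → ℝ)} (hC : Convex ℝ C) (ha : {x | ∀ k, (a k : ℝ) ≤ x k} ⊆ C)
    (hF : newtonPolyhedron F ⊆ C) : newtonPolyhedron (insert a F) ⊆ C := by
  refine newtonPolyhedron_subset_of_convex hC fun b hb x hx => ?_
  rcases mem_insert.1 hb with rfl | hb
  · exact ha hx
  · exact hF (mem_newtonPolyhedron_of_le_s7 hb hx)

theorem convex_orthant_inter_halfSpace (f : (Fin n → ℝ) →ₗ[ℝ] ℝ) :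
    Convex ℝ {x : Fin n → ℝ | (∀ k, 0 ≤ x k) ∧ 1 ≤ f x} :=
  (convex_Ici 0).inter (convex_halfSpace_ge f.isLinear 1)

theorem convex_orthant_inter_iInter_halfSpace {ι : Type*} (f : ι → (Fin n → ℝ) →ₗ[ℝ] ℝ) :
    Convex ℝ {x : Fin n → ℝ | (∀ k, 0 ≤ x k) ∧ ∀ j, 1 ≤ f j x} := by
  rw [Set.ofPred_and, Set.ofPred_forall, Set.ofPred_forall]
  exact (convex_iInter fun k => convex_halfSpace_ge (LinearMap.proj k).isLinear 0).inter
    (convex_iInter fun j => convex_halfSpace_ge (f j).isLinear 1)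

end NewtonPolyhedron

namespace BrieskornPham

variable {n : ℕ}

def support (p : Fin n → ℕ) : Finset (Fin n → ℕ) :=
  univ.image fun k => Pi.single k (p k)

noncomputable def form (p : Fin n → ℕ) : (Fin n → ℝ) →ₗ[ℝ] ℝ :=
  ∑ k, (p k : ℝ)⁻¹ • LinearMap.proj k

theorem form_apply (p : Fin n → ℕ) (x : Fin n → ℝ) : form p x = ∑ k, x k / p k := by
  simp [form, div_eq_inv_mul]

variable {p : Fin n → ℕ}

theorem newtonPolyhedron_support (hp : ∀ k, 0 < p k) :
    newtonPolyhedron (support p) = {x | (∀ k, 0 ≤ x k) ∧ 1 ≤ form p x} := by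
  have hp' (k : Fin n) : (0 : ℝ) < p k := Nat.cast_pos.2 (hp k)
  refine subset_antisymm (newtonPolyhedron_subset_of_convex
    (convex_orthant_inter_halfSpace _) ?_) ?_
  · simp only [support, mem_image, mem_univ, true_and, forall_exists_index,
      forall_apply_eq_imp_iff]
    intro k x hx
    have hx0 (j : Fin n) : 0 ≤ x j := (Nat.cast_nonneg _).trans (hx j)
    refine ⟨hx0, ?_⟩
    have hk : (p k : ℝ) ≤ x k := by simpa using hx k
    calc 1 ≤ x k / p k := (one_le_div (hp' k)).2 hk
      _ ≤ form p x := by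
        rw [form_apply]
        exact single_le_sum (fun j _ => div_nonneg (hx0 j) (hp' j).le) (mem_univ k)
  · rintro x ⟨hx0, hx1⟩
    set s := form p x
    have hs : 0 < s := one_pos.trans_le hx1
    have hx : ∑ k, (x k / p k / s) • (Pi.single k (s * p k) : Fin n → ℝ) = x := by
      ext j
      simp only [Finset.sum_apply, Pi.smul_apply, Pi.single_apply, smul_eq_mul, mul_ite,
        mul_zero, sum_ite_eq, mem_univ, if_true]
      field_simp [(hp' j).ne']
    rw [← hx]
    refine (convex_convexHull ℝ _).sum_mem
      (fun k _ => div_nonneg (div_nonneg (hx0 k) (hp' k).le) hs.le) ?_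
      fun k _ => mem_newtonPolyhedron_of_le_s7 (mem_image_of_mem _ (mem_univ k)) fun j => ?_
    · rw [← sum_div, ← form_apply, div_self hs.ne']
    · rcases eq_or_ne j k with rfl | h
      · simpa using le_mul_of_one_le_left (hp' j).le hx1
      · simp [h]

theorem form_le_form (p : Fin n → ℕ) {x y : Fin n → ℝ} (h : ∀ k, x k ≤ y k) :
    form p x ≤ form p y := by
  simp only [form_apply]
  exact sum_le_sum fun k _ => div_le_div_of_nonneg_right (h k) (Nat.cast_nonneg _)

/-- The linear form equal to `1` at `i` and at the vertices `pⱼ eⱼ`, `j ≠ k`, of the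
Newton diagram of `support p`. -/
noncomputable def facetForm (p i : Fin n → ℕ) (k : Fin n) : (Fin n → ℝ) →ₗ[ℝ] ℝ :=
  form p + ((1 - form p (fun j => (i j : ℝ))) / i k) • LinearMap.proj k

theorem facetForm_apply (p i : Fin n → ℕ) (k : Fin n) (x : Fin n → ℝ) :
    facetForm p i k x = form p x + (1 - form p (fun j => (i j : ℝ))) * (x k / i k) := by
  simp [facetForm, mul_div_assoc', div_mul_eq_mul_div]

variable {i : Fin n → ℕ}

theorem newtonPolyhedron_insert_subset (hp : ∀ k, 0 < p k) (hi : ∀ k, 0 < i k)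
    (hσ : form p (fun j => (i j : ℝ)) ≤ 1) :
    newtonPolyhedron (insert i (support p)) ⊆
      {x | (∀ k, 0 ≤ x k) ∧ ∀ k, 1 ≤ facetForm p i k x} := by
  have hi' (k : Fin n) : (0 : ℝ) < i k := Nat.cast_pos.2 (hi k)
  refine newtonPolyhedron_insert_subset_of_convex (convex_orthant_inter_iInter_halfSpace _)
    (fun x hx => ⟨fun k => (Nat.cast_nonneg _).trans (hx k), fun k => ?_⟩) ?_
  · have h1 : 1 ≤ x k / i k := (one_le_div (hi' k)).2 (hx k)
    have h2 := form_le_form p hx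
    rw [facetForm_apply]
    nlinarith
  · rw [newtonPolyhedron_support hp]
    rintro x ⟨hx0, hx1⟩
    refine ⟨hx0, fun k => ?_⟩
    rw [facetForm_apply]
    have := div_nonneg (hx0 k) (hi' k).le
    nlinarith

theorem mem_newtonPolyhedron_insert (hp : ∀ k, 0 < p k) (hi : ∀ k, 0 < i k)
    {x : Fin n → ℝ} {k : Fin n} (hxk : 0 ≤ x k)
    (hx : ∀ j, x k / i k * i j ≤ x j) (h1 : 1 ≤ facetForm p i k x) :
    x ∈ newtonPolyhedron (insert i (support p)) := by
  have hi' (k : Fin n) : (0 : ℝ) < i k := Nat.cast_pos.2 (hi k)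
  set t := x k / i k
  rcases le_or_gt 1 t with ht | ht
  · exact mem_newtonPolyhedron_of_le_s7 (mem_insert_self _ _) fun j =>
      (le_mul_of_one_le_left (Nat.cast_nonneg _) ht).trans (hx j)
  set y := (1 - t)⁻¹ • (x - t • fun j => (i j : ℝ))
  have hy : y ∈ newtonPolyhedron (insert i (support p)) := by
    refine newtonPolyhedron_mono (subset_insert _ _) ?_
    rw [newtonPolyhedron_support hp]
    have h1t : 0 < 1 - t := sub_pos.2 ht
    refine ⟨fun j => ?_, ?_⟩
    · simpa [y] using mul_nonneg (inv_nonneg.2 h1t.le) (sub_nonneg.2 (hx j))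
    · rw [facetForm_apply] at h1
      simp only [y, map_smul, map_sub, smul_eq_mul]
      rw [le_inv_mul_iff₀ h1t]
      linarith
  have hx_eq : x = t • (fun j => (i j : ℝ)) + (1 - t) • y := by
    rw [smul_inv_smul₀ (sub_pos.2 ht).ne', add_sub_cancel]
  rw [hx_eq]
  exact (convex_convexHull ℝ _) (mem_newtonPolyhedron_of_le_s7 (mem_insert_self _ _) fun j => le_rfl)
    hy (div_nonneg hxk (hi' k).le) (sub_nonneg.2 ht.le) (add_sub_cancel _ _)

/-- `toLin' (facetMatrix p i k)` maps `unitSimplex` onto the simplex with vertices `0`, `i` and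
`pⱼ eⱼ` (`j ≠ k`). -/
noncomputable def facetMatrix (p i : Fin n → ℕ) (k : Fin n) : Matrix (Fin n) (Fin n) ℝ :=
  (diagonal fun j => (p j : ℝ)).updateCol k fun j => (i j : ℝ)

theorem facetMatrix_mulVec (p i : Fin n → ℕ) (k : Fin n) (u : Fin n → ℝ) (j : Fin n) :
    (facetMatrix p i k *ᵥ u) j = i j * u k + if j = k then 0 else p j * u j := by
  rw [mulVec, dotProduct, ← add_sum_erase _ _ (mem_univ k)]
  simp only [facetMatrix, updateCol_self, updateCol_apply, diagonal_apply, ite_mul, zero_mul]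
  rw [sum_ite_of_false (fun c hc => (mem_erase.1 hc).1), sum_ite_eq]
  simp [ite_not]

theorem det_facetMatrix (hp : ∀ k, 0 < p k) (i : Fin n → ℕ) (k : Fin n) :
    (facetMatrix p i k).det = i k * ∏ j ∈ univ.erase k, (p j : ℝ) := by
  have hp' (k : Fin n) : (p k : ℝ) ≠ 0 := Nat.cast_ne_zero.2 (hp k).ne'
  have h := det_updateCol_sum (diagonal fun j => (p j : ℝ)) k
    fun j => (i j : ℝ) / p j
  simp only [diagonal_apply, smul_eq_mul, mul_ite, mul_zero, sum_ite_eq, mem_univ,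
    if_true, div_mul_cancel₀ _ (hp' _), det_diagonal] at h
  rw [facetMatrix, h, ← mul_prod_erase univ _ (mem_univ k)]
  field_simp [hp' k]

theorem facetForm_facetMatrix_mulVec (hp : ∀ k, 0 < p k) (hi : ∀ k, 0 < i k) (k : Fin n)
    (u : Fin n → ℝ) : facetForm p i k (facetMatrix p i k *ᵥ u) = ∑ j, u j := by
  have hp' (k : Fin n) : (p k : ℝ) ≠ 0 := Nat.cast_ne_zero.2 (hp k).ne'
  have hi' : (i k : ℝ) ≠ 0 := Nat.cast_ne_zero.2 (hi k).ne'
  have h_bp : form p (facetMatrix p i k *ᵥ u) =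
      u k * form p (fun j => (i j : ℝ)) + ∑ j ∈ univ.erase k, u j := by
    simp only [form_apply, facetMatrix_mulVec, add_div, sum_add_distrib, mul_sum]
    congr 1
    · exact sum_congr rfl fun j _ => by ring
    · rw [← add_sum_erase _ _ (mem_univ k), if_pos rfl, zero_div, zero_add]
      exact sum_congr rfl fun j hj => by
        rw [if_neg (ne_of_mem_erase hj), mul_div_cancel_left₀ _ (hp' j)]
  rw [facetForm_apply, h_bp, facetMatrix_mulVec, if_pos rfl, add_zero,
    mul_div_cancel_left₀ _ hi', ← add_sum_erase _ _ (mem_univ k)]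
  ring

theorem image_facetMatrix (hp : ∀ k, 0 < p k) (hi : ∀ k, 0 < i k) (k : Fin n) :
    toLin' (facetMatrix p i k) '' unitSimplex (Fin n) =
      {x : Fin n → ℝ | 0 ≤ x k ∧ (∀ j, x k / i k * i j ≤ x j) ∧ facetForm p i k x < 1} := by
  have hp' (k : Fin n) : (0 : ℝ) < p k := Nat.cast_pos.2 (hp k)
  have hi' (k : Fin n) : (0 : ℝ) < i k := Nat.cast_pos.2 (hi k)
  ext x
  constructor
  · rintro ⟨u, ⟨hu0, hu1⟩, rfl⟩
    have hk : (facetMatrix p i k *ᵥ u) k / i k = u k := by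
      rw [facetMatrix_mulVec, if_pos rfl, add_zero, mul_div_cancel_left₀ _ (hi' k).ne']
    simp only [toLin'_apply, Set.mem_ofPred_eq, hk, facetForm_facetMatrix_mulVec hp hi]
    refine ⟨?_, fun j => ?_, hu1⟩
    · rw [facetMatrix_mulVec, if_pos rfl, add_zero]
      exact mul_nonneg (hi' k).le (hu0 k)
    · rw [facetMatrix_mulVec, mul_comm]
      split_ifs
      · simp
      · exact le_add_of_nonneg_right (mul_nonneg (hp' j).le (hu0 j))
  · rintro ⟨hxk, hx, h1⟩
    set u : Fin n → ℝ := fun j => if j = k then x k / i k else (x j - x k / i k * i j) / p j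
    have hu : facetMatrix p i k *ᵥ u = x := by
      ext j
      rw [facetMatrix_mulVec]
      rcases eq_or_ne j k with rfl | hj
      · simp [u, mul_div_cancel₀ _ (hi' j).ne']
      · simp [u, hj, mul_div_cancel₀ _ (hp' j).ne']
        ring
    refine ⟨u, ⟨fun j => ?_, ?_⟩, by rw [toLin'_apply, hu]⟩
    · rcases eq_or_ne j k with rfl | hj
      · simpa [u] using div_nonneg hxk (hi' j).le
      · simpa [u, hj] using div_nonneg (sub_nonneg.2 (hx j)) (hp' j).le
    · rwa [← facetForm_facetMatrix_mulVec hp hi, hu]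

theorem orthant_diff_newtonPolyhedron_support (hp : ∀ k, 0 < p k) :
    {x | (∀ k, 0 ≤ x k) ∧ x ∉ newtonPolyhedron (support p)} =
      toLin' (diagonal fun k => (p k : ℝ)) '' unitSimplex (Fin n) := by
  have hp' (k : Fin n) : (0 : ℝ) < p k := Nat.cast_pos.2 (hp k)
  have h_bp (u : Fin n → ℝ) : form p (toLin' (diagonal fun k => (p k : ℝ)) u) = ∑ k, u k := by
    simp [form_apply, mulVec_diagonal, mul_div_cancel_left₀ _ (hp' _).ne']
  rw [newtonPolyhedron_support hp]
  ext x
  simp only [Set.mem_ofPred_eq, not_and, not_le, Set.mem_image, unitSimplex]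
  constructor
  · rintro ⟨hx0, hx1⟩
    refine ⟨fun k => x k / p k, ⟨fun k => div_nonneg (hx0 k) (hp' k).le, ?_⟩, ?_⟩
    · simpa [form_apply] using hx1 hx0
    · ext k; simp [mulVec_diagonal, mul_div_cancel₀ _ (hp' k).ne']
  · rintro ⟨u, ⟨hu0, hu1⟩, rfl⟩
    refine ⟨fun k => ?_, fun _ => by rwa [h_bp]⟩
    simpa [mulVec_diagonal] using mul_nonneg (hp' k).le (hu0 k)

theorem orthant_diff_newtonPolyhedron_insert (hp : ∀ k, 0 < p k) (hi : ∀ k, 0 < i k)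
    (hσ : form p (fun j => (i j : ℝ)) ≤ 1) :
    {x | (∀ k, 0 ≤ x k) ∧ x ∉ newtonPolyhedron (insert i (support p))} =
      ⋃ k, toLin' (facetMatrix p i k) '' unitSimplex (Fin n) := by
  have hi' (k : Fin n) : (0 : ℝ) < i k := Nat.cast_pos.2 (hi k)
  ext x
  simp only [Set.mem_iUnion, image_facetMatrix hp hi, Set.mem_ofPred_eq]
  constructor
  · rintro ⟨hx0, hx⟩
    have : (univ : Finset (Fin n)).Nonempty := by
      by_contra h
      exact hx (mem_newtonPolyhedron_of_le_s7 (mem_insert_self _ _) fun k => absurd ⟨k, mem_univ k⟩ h)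
    obtain ⟨k, -, hk⟩ := exists_min_image univ (fun j => x j / i j) this
    have hmin (j : Fin n) : x k / i k * i j ≤ x j := by
      rw [← le_div_iff₀ (hi' j)]; exact hk j (mem_univ j)
    exact ⟨k, hx0 k, hmin, not_le.1 fun h1 =>
      hx (mem_newtonPolyhedron_insert hp hi (hx0 k) hmin h1)⟩
  · rintro ⟨k, hxk, hmin, h1⟩
    refine ⟨fun j => (mul_nonneg (div_nonneg hxk (hi' k).le) (hi' j).le).trans (hmin j),
      fun hx => ?_⟩
    exact h1.not_ge ((newtonPolyhedron_insert_subset hp hi hσ hx).2 k)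

theorem pairwise_aedisjoint_image_facetMatrix (hp : ∀ k, 0 < p k) (hi : ∀ k, 0 < i k) :
    Pairwise (Function.onFun (AEDisjoint volume)
      fun k => toLin' (facetMatrix p i k) '' unitSimplex (Fin n)) := by
  have hi' (k : Fin n) : (0 : ℝ) < i k := Nat.cast_pos.2 (hi k)
  intro k l hkl
  let f : (Fin n → ℝ) →ₗ[ℝ] ℝ := (i l : ℝ) • LinearMap.proj k - (i k : ℝ) • LinearMap.proj l
  have hf : f ≠ 0 := fun h => by
    simpa [f, hkl, (hi' l).ne'] using congr($h (Pi.single k 1))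
  refine measure_mono_null (fun x hx => ?_) (volume_setOf_eq_zero_of_ne_zero hf)
  simp only [Set.mem_inter_iff, image_facetMatrix hp hi, Set.mem_ofPred_eq] at hx
  obtain ⟨⟨-, hk, -⟩, ⟨-, hl, -⟩⟩ := hx
  have h1 := hk l
  have h2 := hl k
  rw [div_mul_eq_mul_div, div_le_iff₀ (hi' k)] at h1
  rw [div_mul_eq_mul_div, div_le_iff₀ (hi' l)] at h2
  simp only [Set.mem_ofPred_eq, f, LinearMap.sub_apply, LinearMap.smul_apply, LinearMap.proj_apply,
    smul_eq_mul]
  linarith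

theorem newtonVolume_support_univ (hp : ∀ k, 0 < p k) :
    newtonVolume (support p) univ = (∏ k, (p k : ℝ)) / n ! := by
  rw [newtonVolume_univ, orthant_diff_newtonPolyhedron_support hp, volume_image_toLin',
    volume_unitSimplex, det_diagonal, Fintype.card_fin, ← ENNReal.ofReal_mul (abs_nonneg _),
    ENNReal.toReal_ofReal (by positivity), abs_of_nonneg (by positivity), div_eq_mul_inv]

theorem newtonVolume_insert_support_univ (hp : ∀ k, 0 < p k) (hi : ∀ k, 0 < i k)
    (hσ : form p (fun j => (i j : ℝ)) ≤ 1) :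
    newtonVolume (insert i (support p)) univ =
      (∑ k, (i k : ℝ) * ∏ j ∈ univ.erase k, (p j : ℝ)) / n ! := by
  have h_det (k : Fin n) : 0 ≤ (facetMatrix p i k).det := by
    rw [det_facetMatrix hp]; positivity
  have h_det_ne (k : Fin n) : (facetMatrix p i k).det ≠ 0 := by
    rw [det_facetMatrix hp]
    exact mul_ne_zero (Nat.cast_ne_zero.2 (hi k).ne')
      (prod_ne_zero_iff.2 fun j _ => Nat.cast_ne_zero.2 (hp j).ne')
  have h_meas (k : Fin n) :
      NullMeasurableSet (toLin' (facetMatrix p i k) '' unitSimplex (Fin n)) volume :=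
    (measurableSet_image_toLin' (h_det_ne k) measurableSet_unitSimplex).nullMeasurableSet
  rw [newtonVolume_univ, orthant_diff_newtonPolyhedron_insert hp hi hσ,
    measure_iUnion₀ (pairwise_aedisjoint_image_facetMatrix hp hi) h_meas, tsum_fintype]
  simp only [volume_image_toLin', volume_unitSimplex, Fintype.card_fin, abs_of_nonneg (h_det _),
    ← ENNReal.ofReal_mul (h_det _)]
  have h_term (k : Fin n) : 0 ≤ (facetMatrix p i k).det * (n ! : ℝ)⁻¹ :=
    mul_nonneg (h_det k) (by positivity)
  rw [← ENNReal.ofReal_sum_of_nonneg fun k _ => h_term k,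
    ENNReal.toReal_ofReal (sum_nonneg fun k _ => h_term k), ← sum_mul, div_eq_mul_inv]
  simp only [det_facetMatrix hp]

end BrieskornPham

theorem newtonNumber_drop_interior_general (n : ℕ) (p : Fin n → ℕ)
    (hp : ∀ k, 2 ≤ p k) (i : Fin n → ℕ) (hi : ∀ k, 1 ≤ i k)
    (hsum : ∑ k, (i k : ℝ) / (p k : ℝ) < 1) :
    newtonNumber (Finset.image (fun k : Fin n => Pi.single k (p k))
        Finset.univ) -
      newtonNumber (insert i (Finset.image (fun k : Fin n => Pi.single k (p k))
        Finset.univ)) =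
    (∏ k, (p k : ℝ)) -
      ∑ k, (i k : ℝ) * ∏ j ∈ Finset.univ.erase k, (p j : ℝ) := by
  have hp' (k : Fin n) : 0 < p k := zero_lt_two.trans_le (hp k)
  have hi' : ∀ k, 0 < i k := hi
  have hσ : BrieskornPham.form p (fun j => (i j : ℝ)) ≤ 1 :=
    ((BrieskornPham.form_apply p _).trans_lt hsum).le
  rw [← BrieskornPham.support, newtonNumber_sub_newtonNumber_insert _ fun k => (hi' k).ne',
    BrieskornPham.newtonVolume_support_univ hp',
    BrieskornPham.newtonVolume_insert_support_univ hp' hi' hσ]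
  field_simp

/-- If the lattice point `i` strictly under the Newton diagram of
`F₀ = {p₁e₁, …, pₙeₙ}` has all coordinates `≥ 1`, then the drop of the Newton
number caused by adjoining `i` equals
`p₁⋯pₙ − i₁p′₁ − ⋯ − iₙp′ₙ`, where `p′ₖ = ∏_{j ≠ k} pⱼ`. -/
theorem newtonNumber_drop_interior (n : ℕ) (hn : 1 ≤ n) (p : Fin n → ℕ)
    (hp : ∀ k, 2 ≤ p k) (i : Fin n → ℕ) (hi : ∀ k, 1 ≤ i k)
    (hsum : ∑ k, (i k : ℝ) / (p k : ℝ) < 1) :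
    newtonNumber (Finset.image (fun k : Fin n => Pi.single k (p k))
        Finset.univ) -
      newtonNumber (insert i (Finset.image (fun k : Fin n => Pi.single k (p k))
        Finset.univ)) =
    (∏ k, (p k : ℝ)) -
      ∑ k, (i k : ℝ) * ∏ j ∈ Finset.univ.erase k, (p j : ℝ) :=
  newtonNumber_drop_interior_general n p hp i hi hsum
end

section
/- Let p₁, p₂ ≥ 2 be integers and let d = gcd(p₁,p₂). If d < min(p₁,p₂), then d is the minimum of the set {p₁p₂ − i₁p₂ − i₂p₁ : i₁, i₂ ∈ ℤ, 0 < i₁ < p₁, 0 < i₂ < p₂, i₁p₂ + i₂p₁ < p₁p₂}; that is, this set is nonempty, contains d, and all of its elements are ≥ d. -/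
/-!
Every value `p₁p₂ − i₁p₂ − i₂p₁` is an integer combination of `p₁` and `p₂`, so when it is positive
it is at least `d = gcd(p₁, p₂)`. Conversely, Bézout gives `i₁ ∈ (0, p₁)` with `i₁p₂ ≡ −d (mod p₁)`,
and `i₂ = (p₁p₂ − d − i₁p₂) / p₁` then lies in `(0, p₂)` because `0 < d < min(p₁, p₂)`.
-/

namespace Int

theorem gcd_le_of_pos_mul_add_mul {a b x y : ℤ} (h : 0 < a * x + b * y) :
    (a.gcd b : ℤ) ≤ a * x + b * y :=
  le_of_dvd h (dvd_add ((gcd_dvd_left a b).mul_right x) ((gcd_dvd_right a b).mul_right y))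

theorem exists_dvd_mul_add_gcd {a : ℤ} (ha : 0 < a) (b : ℤ) :
    ∃ i, 0 ≤ i ∧ i < a ∧ a ∣ i * b + a.gcd b := by
  refine ⟨-a.gcdB b % a, emod_nonneg _ ha.ne', emod_lt_of_pos _ ha, ?_⟩
  have hi : a ∣ -a.gcdB b - -a.gcdB b % a := (mod_modEq _ a).dvd
  have bezout : -a.gcdB b % a * b + a.gcd b =
      a * a.gcdA b - (-a.gcdB b - -a.gcdB b % a) * b := by
    rw [gcd_eq_gcd_ab]; ring
  rw [bezout]
  exact dvd_sub (dvd_mul_right a _) (hi.mul_right b)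

theorem exists_mul_add_mul_eq_mul_sub_gcd {a b : ℤ} (ha : (a.gcd b : ℤ) < a)
    (hb : (a.gcd b : ℤ) < b) :
    ∃ i j, 0 < i ∧ i < a ∧ 0 < j ∧ j < b ∧ i * b + j * a = a * b - a.gcd b := by
  have ha₀ : 0 < a := lt_of_le_of_lt (by positivity) ha
  have hd₀ : 0 < (a.gcd b : ℤ) := mod_cast gcd_pos_of_ne_zero_left b ha₀.ne'
  obtain ⟨i, hi₀, hia, k, hk⟩ := exists_dvd_mul_add_gcd ha₀ b
  have hi : 0 < i := by
    refine hi₀.lt_of_ne fun h => ?_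
    subst h
    have : a ≤ a.gcd b := le_of_dvd hd₀ ⟨k, by simpa using hk⟩
    omega
  have hk₀ : 0 < k := by
    by_contra! h
    nlinarith
  have hkb : k < b := by
    by_contra! h
    nlinarith
  exact ⟨i, b - k, hi, hia, by omega, by omega, by linarith⟩

end Int

theorem gcd_is_least_jump_general (p₁ p₂ : ℤ)
    (hd : (Int.gcd p₁ p₂ : ℤ) < min p₁ p₂) :
    IsLeast
      {v : ℤ | ∃ i₁ i₂ : ℤ, 0 < i₁ ∧ i₁ < p₁ ∧ 0 < i₂ ∧ i₂ < p₂ ∧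
        i₁ * p₂ + i₂ * p₁ < p₁ * p₂ ∧ v = p₁ * p₂ - i₁ * p₂ - i₂ * p₁}
      (Int.gcd p₁ p₂ : ℤ) := by
  have hd₁ : (Int.gcd p₁ p₂ : ℤ) < p₁ := hd.trans_le (min_le_left _ _)
  have hd₂ : (Int.gcd p₁ p₂ : ℤ) < p₂ := hd.trans_le (min_le_right _ _)
  constructor
  · obtain ⟨i₁, i₂, hi₁, hi₁p, hi₂, hi₂p, h⟩ := Int.exists_mul_add_mul_eq_mul_sub_gcd hd₁ hd₂
    have hd₀ : 0 < (Int.gcd p₁ p₂ : ℤ) := mod_cast Int.gcd_pos_of_ne_zero_left p₂ (by omega)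
    exact ⟨i₁, i₂, hi₁, hi₁p, hi₂, hi₂p, by omega, by omega⟩
  · rintro _ ⟨i₁, i₂, -, -, -, -, hlt, rfl⟩
    have hv : p₁ * p₂ - i₁ * p₂ - i₂ * p₁ = p₁ * (p₂ - i₂) + p₂ * -i₁ := by ring
    rw [hv]
    exact Int.gcd_le_of_pos_mul_add_mul (by linarith)

/-- For integers `p₁, p₂ ≥ 2` with `d = gcd(p₁, p₂) < min(p₁, p₂)`, the number
`d` is the minimum of the set of values `p₁p₂ − i₁p₂ − i₂p₁` over integer
points `(i₁, i₂)` with `0 < i₁ < p₁`, `0 < i₂ < p₂` and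
`i₁p₂ + i₂p₁ < p₁p₂` (the jumps of Milnor numbers of monomial deformations of
`z₁^{p₁} + z₂^{p₂}`). -/
theorem gcd_is_least_jump (p₁ p₂ : ℤ) (h₁ : 2 ≤ p₁) (h₂ : 2 ≤ p₂)
    (hd : (Int.gcd p₁ p₂ : ℤ) < min p₁ p₂) :
    IsLeast
      {v : ℤ | ∃ i₁ i₂ : ℤ, 0 < i₁ ∧ i₁ < p₁ ∧ 0 < i₂ ∧ i₂ < p₂ ∧
        i₁ * p₂ + i₂ * p₁ < p₁ * p₂ ∧ v = p₁ * p₂ - i₁ * p₂ - i₂ * p₁}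
      (Int.gcd p₁ p₂ : ℤ) :=
  gcd_is_least_jump_general p₁ p₂ hd
end

section
/- Let p₁, p₂ ≥ 2 be integers and let d = gcd(p₁,p₂). Consider the set M = {p₁p₂ − i₁p₂ − i₂p₁ : i₁, i₂ ∈ ℤ, 0 < i₁ < p₁, 0 < i₂ < p₂, i₁p₂ + i₂p₁ < p₁p₂} ∪ {p₁ − 1, p₂ − 1}. Then the minimum of M equals d if d < min(p₁,p₂), and equals d − 1 if d = min(p₁,p₂). -/
/-!
Every value `p₁p₂ − i₁p₂ − i₂p₁` is a positive multiple of `d = gcd(p₁, p₂)`, so `d` bounds the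
interior part of `M` from below. Conversely, when `0 < d < min(p₁, p₂)`, Bézout gives `i₁` with
`p₁ ∣ i₁p₂ + d`; reducing `i₁` modulo `p₁` places it in `(0, p₁)`, and then
`i₂ = (p₁p₂ − d − i₁p₂) / p₁` lies in `(0, p₂)`, so `d` itself is attained. When `d = min(p₁, p₂)`
the axis value `min(p₁, p₂) − 1 = d − 1` undercuts every interior value.
-/

def newtonInteriorValues (p₁ p₂ : ℤ) : Set ℤ :=
  {v | ∃ i₁ i₂ : ℤ, 0 < i₁ ∧ i₁ < p₁ ∧ 0 < i₂ ∧ i₂ < p₂ ∧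
    i₁ * p₂ + i₂ * p₁ < p₁ * p₂ ∧ v = p₁ * p₂ - i₁ * p₂ - i₂ * p₁}

namespace newtonInteriorValues

variable {p₁ p₂ v : ℤ}

lemma pos_of_mem (hv : v ∈ newtonInteriorValues p₁ p₂) : 0 < v := by
  obtain ⟨i₁, i₂, -, -, -, -, hlt, rfl⟩ := hv
  linarith

lemma gcd_dvd_of_mem (hv : v ∈ newtonInteriorValues p₁ p₂) : (p₁.gcd p₂ : ℤ) ∣ v := by
  obtain ⟨i₁, i₂, -, -, -, -, -, rfl⟩ := hv
  have h₁ : (p₁.gcd p₂ : ℤ) ∣ p₁ := Int.gcd_dvd_left p₁ p₂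
  have h₂ : (p₁.gcd p₂ : ℤ) ∣ p₂ := Int.gcd_dvd_right p₁ p₂
  exact ((h₁.mul_right p₂).sub (h₂.mul_left i₁)).sub (h₁.mul_left i₂)

lemma gcd_le_of_mem (hv : v ∈ newtonInteriorValues p₁ p₂) : (p₁.gcd p₂ : ℤ) ≤ v :=
  Int.le_of_dvd (pos_of_mem hv) (gcd_dvd_of_mem hv)

lemma mem_of_dvd_mul_add {i₁ : ℤ} (hv : 0 < v) (hvp₂ : v < p₂) (hi₁ : 0 < i₁) (hi₁p₁ : i₁ < p₁)
    (hdvd : p₁ ∣ i₁ * p₂ + v) : v ∈ newtonInteriorValues p₁ p₂ := by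
  obtain ⟨c, hc⟩ := hdvd
  have hp₁ : 0 < p₁ := hi₁.trans hi₁p₁
  have hi₂p₁ : (p₂ - c) * p₁ = p₁ * p₂ - i₁ * p₂ - v := by linarith
  have hi₂_pos : 0 < (p₂ - c) * p₁ := by nlinarith
  refine ⟨i₁, p₂ - c, hi₁, hi₁p₁, pos_of_mul_pos_left hi₂_pos hp₁.le, ?_, ?_, ?_⟩
  · nlinarith
  · linarith
  · linarith

lemma exists_dvd_mul_add (hv : 0 < v) (hvp₁ : v < p₁) (hdvd : (p₁.gcd p₂ : ℤ) ∣ v) :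
    ∃ i₁, 0 < i₁ ∧ i₁ < p₁ ∧ p₁ ∣ i₁ * p₂ + v := by
  obtain ⟨k, rfl⟩ := hdvd
  have hp₁ : 0 < p₁ := hv.trans hvp₁
  set y := p₁.gcdB p₂ * k
  -- `i₁ ≡ -y (mod p₁)` cancels the `p₂`-part of the Bézout combination `v = p₁ x + p₂ y`
  have hi₁_dvd : p₁ ∣ (-y) % p₁ * p₂ + p₁.gcd p₂ * k := by
    refine ⟨p₁.gcdA p₂ * k - p₂ * ((-y) / p₁), ?_⟩
    rw [Int.emod_def, Int.gcd_eq_gcd_ab]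
    ring
  refine ⟨(-y) % p₁, ?_, Int.emod_lt_of_pos _ hp₁, hi₁_dvd⟩
  refine (Int.emod_nonneg _ hp₁.ne').lt_of_ne fun h₀ => hv.ne' ?_
  rw [← h₀, zero_mul, zero_add] at hi₁_dvd
  exact Int.eq_zero_of_dvd_of_nonneg_of_lt hv.le hvp₁ hi₁_dvd

lemma mem_of_gcd_dvd (hv : 0 < v) (hvp₁ : v < p₁) (hvp₂ : v < p₂)
    (hdvd : (p₁.gcd p₂ : ℤ) ∣ v) : v ∈ newtonInteriorValues p₁ p₂ :=
  let ⟨_, hi₁, hi₁p₁, hi₁_dvd⟩ := exists_dvd_mul_add hv hvp₁ hdvd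
  mem_of_dvd_mul_add hv hvp₂ hi₁ hi₁p₁ hi₁_dvd

end newtonInteriorValues

open newtonInteriorValues

lemma isLeast_gcd_of_gcd_lt_min {p₁ p₂ : ℤ} (hlt : (p₁.gcd p₂ : ℤ) < min p₁ p₂) :
    IsLeast (newtonInteriorValues p₁ p₂ ∪ {p₁ - 1, p₂ - 1}) (p₁.gcd p₂ : ℤ) := by
  have hp₁ : (p₁.gcd p₂ : ℤ) < p₁ := hlt.trans_le (min_le_left _ _)
  have hp₂ : (p₁.gcd p₂ : ℤ) < p₂ := hlt.trans_le (min_le_right _ _)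
  have hd : 0 < p₁.gcd p₂ := Int.gcd_pos_iff.mpr (Or.inl (by omega))
  refine ⟨Or.inl (mem_of_gcd_dvd (by omega) hp₁ hp₂ dvd_rfl), ?_⟩
  rintro v (hv | rfl | rfl)
  · exact gcd_le_of_mem hv
  · omega
  · omega

lemma isLeast_gcd_sub_one_of_gcd_eq_min {p₁ p₂ : ℤ} (heq : (p₁.gcd p₂ : ℤ) = min p₁ p₂) :
    IsLeast (newtonInteriorValues p₁ p₂ ∪ {p₁ - 1, p₂ - 1}) ((p₁.gcd p₂ : ℤ) - 1) := by
  refine ⟨Or.inr ?_, ?_⟩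
  · rcases min_choice p₁ p₂ with h | h <;> simp [heq, h]
  rintro v (hv | rfl | rfl)
  · linarith [gcd_le_of_mem hv]
  · linarith [min_le_left p₁ p₂]
  · linarith [min_le_right p₁ p₂]

theorem jump_brieskorn_pham_two_vars_general (p₁ p₂ : ℤ) :
    ((Int.gcd p₁ p₂ : ℤ) < min p₁ p₂ →
      IsLeast
        ({v : ℤ | ∃ i₁ i₂ : ℤ, 0 < i₁ ∧ i₁ < p₁ ∧ 0 < i₂ ∧ i₂ < p₂ ∧
            i₁ * p₂ + i₂ * p₁ < p₁ * p₂ ∧ v = p₁ * p₂ - i₁ * p₂ - i₂ * p₁} ∪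
          {p₁ - 1, p₂ - 1})
        (Int.gcd p₁ p₂ : ℤ)) ∧
    ((Int.gcd p₁ p₂ : ℤ) = min p₁ p₂ →
      IsLeast
        ({v : ℤ | ∃ i₁ i₂ : ℤ, 0 < i₁ ∧ i₁ < p₁ ∧ 0 < i₂ ∧ i₂ < p₂ ∧
            i₁ * p₂ + i₂ * p₁ < p₁ * p₂ ∧ v = p₁ * p₂ - i₁ * p₂ - i₂ * p₁} ∪
          {p₁ - 1, p₂ - 1})
        ((Int.gcd p₁ p₂ : ℤ) - 1)) :=
  ⟨isLeast_gcd_of_gcd_lt_min, isLeast_gcd_sub_one_of_gcd_eq_min⟩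

/-- Bodin–Walewska formula for the non-degenerate jump of the Milnor number of
`z₁^{p₁} + z₂^{p₂}`: with `d = gcd(p₁, p₂)` and
`M = {p₁p₂ − i₁p₂ − i₂p₁ : 0 < i₁ < p₁, 0 < i₂ < p₂, i₁p₂ + i₂p₁ < p₁p₂}
∪ {p₁ − 1, p₂ − 1}`, the minimum of `M` is `d` if `d < min(p₁,p₂)` and `d − 1`
if `d = min(p₁,p₂)`. -/
theorem jump_brieskorn_pham_two_vars (p₁ p₂ : ℤ) (h₁ : 2 ≤ p₁) (h₂ : 2 ≤ p₂) :
    ((Int.gcd p₁ p₂ : ℤ) < min p₁ p₂ →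
      IsLeast
        ({v : ℤ | ∃ i₁ i₂ : ℤ, 0 < i₁ ∧ i₁ < p₁ ∧ 0 < i₂ ∧ i₂ < p₂ ∧
            i₁ * p₂ + i₂ * p₁ < p₁ * p₂ ∧ v = p₁ * p₂ - i₁ * p₂ - i₂ * p₁} ∪
          {p₁ - 1, p₂ - 1})
        (Int.gcd p₁ p₂ : ℤ)) ∧
    ((Int.gcd p₁ p₂ : ℤ) = min p₁ p₂ →
      IsLeast
        ({v : ℤ | ∃ i₁ i₂ : ℤ, 0 < i₁ ∧ i₁ < p₁ ∧ 0 < i₂ ∧ i₂ < p₂ ∧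
            i₁ * p₂ + i₂ * p₁ < p₁ * p₂ ∧ v = p₁ * p₂ - i₁ * p₂ - i₂ * p₁} ∪
          {p₁ - 1, p₂ - 1})
        ((Int.gcd p₁ p₂ : ℤ) - 1)) :=
  jump_brieskorn_pham_two_vars_general p₁ p₂
end
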